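/- Let f : E → ℝ be differentiable, convex, and L-smooth with L > 0, let x* ∈ E be a global minimizer of f, and let x : ℕ → E be the gradient descent sequence with constant step size λ = 1/L starting from x_0. Then for any ε > 0 and any natural number n ≥ 1 with n ≥ L·‖x_0 - x*‖²/(2ε), one has f(x_n) - f(x*) ≤ ε. -/

import Mathlib

/-!
Convexity, `f a + ⟪∇f a, z - a⟫ ≤ f z`, and the descent lemma for an `L`-Lipschitz gradient,
`f (a + v) ≤ f a + ⟪∇f a, v⟫ + L/2 ‖v‖²`, combine for one step of size `1/L` into
`f x_{k+1} - f z ≤ L/2 (‖x_k - z‖² - ‖x_{k+1} - z‖²)` for every `z`. Since the values `f x_k` do not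
increase, summing over the first `n` steps telescopes to `n (f x_n - f z) ≤ L/2 ‖x_0 - z‖²`.
-/

open RealInnerProductSpace Set

section Gradient

variable {E : Type*} [NormedAddCommGroup E] [InnerProductSpace ℝ E] [CompleteSpace E]
  {f : E → ℝ} {f' : E → E}

theorem HasGradientAt.hasDerivAt_comp_add_smul {g a v : E} {t : ℝ}
    (hf : HasGradientAt f g (a + t • v)) :
    HasDerivAt (fun s : ℝ => f (a + s • v)) ⟪g, v⟫ t := by
  have hline : HasDerivAt (fun s : ℝ => a + s • v) v t := by
    simpa using ((hasDerivAt_id t).smul_const v).const_add a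
  simpa [Function.comp_def] using hf.hasFDerivAt.comp_hasDerivAt t hline

theorem ConvexOn.add_inner_le_of_hasGradientAt (hconv : ConvexOn ℝ univ f) {g a : E}
    (hf : HasGradientAt f g a) (y : E) : f a + ⟪g, y - a⟫ ≤ f y := by
  have hline : ConvexOn ℝ univ (fun t : ℝ => f (a + t • (y - a))) := by
    simpa [Function.comp_def, AffineMap.lineMap_apply, add_comm] using
      hconv.comp_affineMap (AffineMap.lineMap a y)
  have hderiv := HasGradientAt.hasDerivAt_comp_add_smul (t := 0) (v := y - a) (by simpa using hf)
  have hslope := hline.le_slope_of_hasDerivAt (mem_univ 0) (mem_univ 1) zero_lt_one hderiv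
  simp only [slope_def_field, one_smul, add_sub_cancel, zero_smul, add_zero, sub_zero,
    div_one] at hslope
  linarith

theorem le_add_inner_add_sq_of_lipschitz_gradient {L : ℝ}
    (hdiff : ∀ x, HasGradientAt f (f' x) x) (hsmooth : ∀ x y, ‖f' x - f' y‖ ≤ L * ‖x - y‖)
    (a v : E) : f (a + v) ≤ f a + ⟪f' a, v⟫ + L / 2 * ‖v‖ ^ 2 := by
  set g : ℝ → ℝ := fun t => f (a + t • v) - t * ⟪f' a, v⟫ - L / 2 * ‖v‖ ^ 2 * t ^ 2 with hg
  have hg' : ∀ t, HasDerivAt g (⟪f' (a + t • v) - f' a, v⟫ - L * ‖v‖ ^ 2 * t) t := by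
    intro t
    have hline : HasDerivAt (fun s : ℝ => f (a + s • v)) ⟪f' (a + t • v), v⟫ t :=
      (hdiff _).hasDerivAt_comp_add_smul
    have hlin : HasDerivAt (fun s : ℝ => s * ⟪f' a, v⟫) ⟪f' a, v⟫ t := by
      simpa using (hasDerivAt_id t).mul_const ⟪f' a, v⟫
    have hquad : HasDerivAt (fun s : ℝ => L / 2 * ‖v‖ ^ 2 * s ^ 2) (L * ‖v‖ ^ 2 * t) t := by
      refine ((hasDerivAt_pow 2 t).const_mul (L / 2 * ‖v‖ ^ 2)).congr_deriv ?_
      norm_num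
      ring
    exact ((hline.sub hlin).sub hquad).congr_deriv (by rw [inner_sub_left])
  have hanti : AntitoneOn g (Ici 0) := by
    refine antitoneOn_of_hasDerivWithinAt_nonpos (convex_Ici 0)
      (fun t _ => (hg' t).continuousAt.continuousWithinAt) (fun t _ => (hg' t).hasDerivWithinAt) ?_
    intro t ht
    rw [interior_Ici, mem_Ioi] at ht
    have hlip : ⟪f' (a + t • v) - f' a, v⟫ ≤ L * ‖v‖ ^ 2 * t :=
      calc ⟪f' (a + t • v) - f' a, v⟫ ≤ ‖f' (a + t • v) - f' a‖ * ‖v‖ := real_inner_le_norm _ _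
        _ ≤ L * ‖a + t • v - a‖ * ‖v‖ := by gcongr; exact hsmooth _ _
        _ = L * ‖v‖ ^ 2 * t := by
          rw [add_sub_cancel_left, norm_smul, Real.norm_of_nonneg ht.le]; ring
    linarith
  have hg01 := hanti (mem_Ici.2 le_rfl) (mem_Ici.2 zero_le_one) zero_le_one
  simp only [hg, one_smul, one_mul, one_pow, mul_one, zero_smul, add_zero, zero_mul, sub_zero,
    zero_pow two_ne_zero, mul_zero] at hg01
  linarith

theorem gradient_step_le_sub_norm_sq {L : ℝ} (hL : 0 < L)
    (hdiff : ∀ x, HasGradientAt f (f' x) x) (hsmooth : ∀ x y, ‖f' x - f' y‖ ≤ L * ‖x - y‖)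
    (a : E) : f (a - (1 / L) • f' a) ≤ f a - 1 / (2 * L) * ‖f' a‖ ^ 2 := by
  have h := le_add_inner_add_sq_of_lipschitz_gradient hdiff hsmooth a (-((1 / L) • f' a))
  rw [← sub_eq_add_neg, inner_neg_right, real_inner_smul_right, real_inner_self_eq_norm_sq,
    norm_neg, norm_smul, Real.norm_of_nonneg (by positivity)] at h
  have hgap : 1 / L * ‖f' a‖ ^ 2 - L / 2 * (1 / L * ‖f' a‖) ^ 2 = 1 / (2 * L) * ‖f' a‖ ^ 2 := by
    field_simp; ring
  linarith

theorem gradient_step_sub_le {L : ℝ} (hL : 0 < L)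
    (hdiff : ∀ x, HasGradientAt f (f' x) x) (hconv : ConvexOn ℝ univ f)
    (hsmooth : ∀ x y, ‖f' x - f' y‖ ≤ L * ‖x - y‖) (a z : E) :
    f (a - (1 / L) • f' a) - f z ≤
      L / 2 * ‖a - z‖ ^ 2 - L / 2 * ‖a - (1 / L) • f' a - z‖ ^ 2 := by
  have hdesc := gradient_step_le_sub_norm_sq hL hdiff hsmooth a
  have hcvx := hconv.add_inner_le_of_hasGradientAt (hdiff a) z
  have hnorm : ‖a - (1 / L) • f' a - z‖ ^ 2 =
      ‖a - z‖ ^ 2 - 2 * (1 / L) * ⟪a - z, f' a⟫ + (1 / L) ^ 2 * ‖f' a‖ ^ 2 := by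
    rw [sub_right_comm, norm_sub_sq_real, real_inner_smul_right, norm_smul,
      Real.norm_of_nonneg (by positivity)]
    ring
  have hinner : ⟪f' a, z - a⟫ = -⟪a - z, f' a⟫ := by
    rw [real_inner_comm, ← inner_neg_left, neg_sub]
  rw [hnorm]
  rw [hinner] at hcvx
  have hgap : L / 2 * (2 * (1 / L) * ⟪a - z, f' a⟫ - (1 / L) ^ 2 * ‖f' a‖ ^ 2) =
      ⟪a - z, f' a⟫ - 1 / (2 * L) * ‖f' a‖ ^ 2 := by
    field_simp
  linarith

end Gradient

theorem nat_mul_add_le_of_antitone_of_le_sub {a d : ℕ → ℝ} (ha : Antitone a)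
    (h : ∀ k, a (k + 1) ≤ d k - d (k + 1)) (n : ℕ) : n * a n + d n ≤ d 0 := by
  induction n with
  | zero => simp
  | succ n ih =>
    have hmono : (n : ℝ) * a (n + 1) ≤ n * a n := by gcongr; exact ha n.le_succ
    push_cast
    linarith [h n]

theorem gd_convex_eps_complexity_general {E : Type*} [NormedAddCommGroup E] [InnerProductSpace ℝ E]
    [CompleteSpace E]
    (f : E → ℝ) (f' : E → E) (L : ℝ) (hL : 0 < L)
    (hdiff : ∀ x, HasGradientAt f (f' x) x)
    (hconv : ConvexOn ℝ Set.univ f)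
    (hsmooth : ∀ x y, ‖f' x - f' y‖ ≤ L * ‖x - y‖)
    (xstar : E)
    (x : ℕ → E)
    (hiter : ∀ k, x (k + 1) = x k - (1 / L) • f' (x k)) :
    ∀ ε : ℝ, 0 < ε → ∀ n : ℕ, 1 ≤ n →
      L * ‖x 0 - xstar‖ ^ 2 / (2 * ε) ≤ (n : ℝ) →
      f (x n) - f xstar ≤ ε := by
  intro ε hε n hn hN
  have hanti : Antitone fun k => f (x k) - f xstar := by
    refine antitone_nat_of_succ_le fun k => ?_
    have hstep := gradient_step_le_sub_norm_sq hL hdiff hsmooth (x k)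
    rw [← hiter] at hstep
    have hgain : 0 ≤ 1 / (2 * L) * ‖f' (x k)‖ ^ 2 := by positivity
    linarith
  have hsum := nat_mul_add_le_of_antitone_of_le_sub hanti
    (d := fun k => L / 2 * ‖x k - xstar‖ ^ 2)
    (fun k => hiter k ▸ gradient_step_sub_le hL hdiff hconv hsmooth (x k) xstar) n
  have hn' : (0 : ℝ) < n := by exact_mod_cast hn
  rw [div_le_iff₀ (by positivity)] at hN
  have hdist : 0 ≤ L / 2 * ‖x n - xstar‖ ^ 2 := by positivity
  have hmul : (n : ℝ) * (f (x n) - f xstar) ≤ n * ε := by linarith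
  exact le_of_mul_le_mul_left hmul hn'

theorem gd_convex_eps_complexity {E : Type*} [NormedAddCommGroup E] [InnerProductSpace ℝ E]
    [CompleteSpace E]
    (f : E → ℝ) (f' : E → E) (L : ℝ) (hL : 0 < L)
    (hdiff : ∀ x, HasGradientAt f (f' x) x)
    (hconv : ConvexOn ℝ Set.univ f)
    (hsmooth : ∀ x y, ‖f' x - f' y‖ ≤ L * ‖x - y‖)
    (xstar : E) (hmin : ∀ y, f xstar ≤ f y)
    (x : ℕ → E)
    (hiter : ∀ k, x (k + 1) = x k - (1 / L) • f' (x k)) :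
    ∀ ε : ℝ, 0 < ε → ∀ n : ℕ, 1 ≤ n →
      L * ‖x 0 - xstar‖ ^ 2 / (2 * ε) ≤ (n : ℝ) →
      f (x n) - f xstar ≤ ε :=
  gd_convex_eps_complexity_general f f' L hL hdiff hconv hsmooth xstar x hiter
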